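/- Let E ∈ ℝ² with E ≠ 0, let R, X ∈ ℝ with R ≠ 0 and X ≠ 0, let Imax > 0, and let M₁ ≠ M₂ be two distinct matrices from {M_P, M_Q, M_V}. Let f₁, f₂ : ℝ → ℝ be convex and differentiable, and let ρ > 0. Then every minimizer W* of the function W ↦ f₁(Tr(M₁ W)) + f₂(Tr(M₂ W)) + ρ·Tr(W) over the set 𝒲 satisfies rank(W*) ≤ 1. -/

import Mathlib

/-- The matrix `J` with rows `(0,1)` and `(-1,0)`. -/
def Jmat : Matrix (Fin 2) (Fin 2) ℝ := !![0, 1; -1, 0]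

/-- The impedance matrix `Z` with rows `(R,-X)` and `(X,R)`. -/
def Zmat (R X : ℝ) : Matrix (Fin 2) (Fin 2) ℝ := !![R, -X; X, R]

/-- Interpret a plain vector `Fin 2 → ℝ` as an element of Euclidean space `ℝ²`. -/
noncomputable def toE (v : Fin 2 → ℝ) : EuclideanSpace ℝ (Fin 2) := WithLp.toLp 2 v

/-- The vector `J E ∈ ℝ²`. -/
noncomputable def Jv (E : EuclideanSpace ℝ (Fin 2)) : EuclideanSpace ℝ (Fin 2) :=
  toE (Jmat.mulVec (fun i => E i))

/-- The vector `Zᵀ E ∈ ℝ²`. -/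
noncomputable def ZtE (R X : ℝ) (E : EuclideanSpace ℝ (Fin 2)) : EuclideanSpace ℝ (Fin 2) :=
  toE ((Zmat R X).transpose.mulVec (fun i => E i))

/-- `M(α, a, ζ)`: the 3×3 symmetric matrix with top-left 2×2 block `α·I₂`,
top-right column `a/2`, bottom-left row `aᵀ/2`, and bottom-right entry `ζ`. -/
noncomputable def Mmat (α : ℝ) (a : EuclideanSpace ℝ (Fin 2)) (ζ : ℝ) :
    Matrix (Fin 3) (Fin 3) ℝ :=
  !![α, 0, a 0 / 2; 0, α, a 1 / 2; a 0 / 2, a 1 / 2, ζ]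

/-- `M_P := M(3R/2, (3/2)E, 0)`. -/
noncomputable def MP (E : EuclideanSpace ℝ (Fin 2)) (R : ℝ) : Matrix (Fin 3) (Fin 3) ℝ :=
  Mmat (3 * R / 2) ((3 / 2 : ℝ) • E) 0

/-- `M_Q := M(3X/2, (3/2)JE, 0)`. -/
noncomputable def MQ (E : EuclideanSpace ℝ (Fin 2)) (X : ℝ) : Matrix (Fin 3) (Fin 3) ℝ :=
  Mmat (3 * X / 2) ((3 / 2 : ℝ) • Jv E) 0

/-- `M_V := M(R² + X², 2ZᵀE, ‖E‖²)`. -/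
noncomputable def MV (E : EuclideanSpace ℝ (Fin 2)) (R X : ℝ) : Matrix (Fin 3) (Fin 3) ℝ :=
  Mmat (R ^ 2 + X ^ 2) ((2 : ℝ) • ZtE R X E) (‖E‖ ^ 2)

/-- The SDP feasible set `𝒲`. -/
def Wset (Imax : ℝ) : Set (Matrix (Fin 3) (Fin 3) ℝ) :=
  {W | W.PosSemidef ∧ W 0 0 + W 1 1 ≤ Imax ^ 2 ∧ W 2 2 = 1}

/-!
If `W ∈ Wset Imax` has rank at least two, split off the entry `W 2 2 = 1`: `W = g gᵀ + S` with
`g = W 2` and `S ⪰ 0` nonzero with vanishing last row. For small `t > 0`, replacing `g` by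
`g + t • (d₀, d₁, 0)` and `S` by a suitable multiple `μ • S`, `μ ≥ 0`, stays in `Wset Imax`,
lowers `W 0 0 + W 1 1` by exactly `t` and moves `(W 2 0, W 2 1)` by `t • (d₀, d₁)`.
Since `Tr (Mmat α a ζ * W) = α (W 0 0 + W 1 1) + a 0 W 2 0 + a 1 W 2 1 + ζ W 2 2`, and the vectors
`a` of two distinct matrices among `MP, MQ, MV` are linearly independent, `d` can be chosen to keep
both `Tr (Mᵢ W)` fixed while `Tr W` drops by `t`, which contradicts minimality because `ρ > 0`.
-/

open Matrix Filter Topology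

theorem Matrix.PosSemidef.sq_dotProduct_mulVec_le {n : Type*} [Fintype n] {A : Matrix n n ℝ}
    (hA : A.PosSemidef) (x y : n → ℝ) :
    (y ⬝ᵥ A *ᵥ x) ^ 2 ≤ (x ⬝ᵥ A *ᵥ x) * (y ⬝ᵥ A *ᵥ y) := by
  let := A.toSeminormedAddCommGroup hA
  let := A.toInnerProductSpace hA
  have h := real_inner_mul_inner_self_le x y
  change (A *ᵥ y ⬝ᵥ star x) * (A *ᵥ y ⬝ᵥ star x) ≤ (A *ᵥ x ⬝ᵥ star x) * (A *ᵥ y ⬝ᵥ star y) at h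
  simp only [star_trivial, dotProduct_comm (A *ᵥ _)] at h
  rwa [dotProduct_mulVec, ← mulVec_transpose, ← conjTranspose_eq_transpose_of_trivial, hA.1.eq,
    dotProduct_comm, ← sq] at h

theorem Matrix.PosSemidef.sub_vecMulVec_mulVec {n : Type*} [Fintype n] {A : Matrix n n ℝ}
    (hA : A.PosSemidef) {x : n → ℝ} (hx : x ⬝ᵥ A *ᵥ x = 1) :
    (A - vecMulVec (A *ᵥ x) (A *ᵥ x)).PosSemidef := by
  refine .of_dotProduct_mulVec_nonneg (hA.1.sub ?_) fun y => ?_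
  · simpa using (posSemidef_vecMulVec_self_star (A *ᵥ x)).1
  · have h := hA.sq_dotProduct_mulVec_le x y
    rw [hx, one_mul] at h
    simp only [star_trivial, sub_mulVec, dotProduct_sub, vecMulVec_mulVec, dotProduct_smul,
      op_smul_eq_mul, dotProduct_comm (A *ᵥ x) y]
    linarith

theorem exists_pos_mul_add_mul_le (b c : ℝ) {s : ℝ} (hs : 0 < s) :
    ∃ t > 0, t * (b + t * c) ≤ s := by
  have hlim : Tendsto (fun t : ℝ => t * (b + t * c)) (𝓝[>] 0) (𝓝 0) := by
    have h : Continuous (fun t : ℝ => t * (b + t * c)) := by fun_prop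
    simpa using (h.tendsto 0).mono_left nhdsWithin_le_nhds
  obtain ⟨t, hts, ht⟩ := ((hlim.eventually (ge_mem_nhds hs)).and self_mem_nhdsWithin).exists
  exact ⟨t, ht, hts⟩

theorem Matrix.PosSemidef.exists_eq_vecMulVec_add {n : Type*} [Fintype n] [DecidableEq n]
    {W : Matrix n n ℝ} (hW : W.PosSemidef) {k : n} (hk : W k k = 1) :
    ∃ S : Matrix n n ℝ, S.PosSemidef ∧ S k = 0 ∧ W = vecMulVec (W k) (W k) + S := by
  have hg : W *ᵥ Pi.single k 1 = W k := funext fun i => by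
    simpa [mulVec_single] using hW.1.apply k i
  refine ⟨W - vecMulVec (W k) (W k), hg ▸ hW.sub_vecMulVec_mulVec (by simpa using hk), ?_, ?_⟩
  · ext j
    simp [vecMulVec_apply, hk]
  · abel

theorem Matrix.PosSemidef.trace_pos {n : Type*} [Fintype n] {A : Matrix n n ℝ}
    (hA : A.PosSemidef) (h : A ≠ 0) : 0 < A.trace :=
  hA.trace_nonneg.lt_of_ne (Ne.symm (hA.trace_eq_zero_iff.not.mpr h))

theorem exists_mem_Wset_of_one_lt_rank {Imax : ℝ} {W : Matrix (Fin 3) (Fin 3) ℝ}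
    (hW : W ∈ Wset Imax) (hrank : 1 < W.rank) (d₀ d₁ : ℝ) :
    ∃ t > 0, ∃ W' ∈ Wset Imax, W' 0 0 + W' 1 1 = W 0 0 + W 1 1 - t ∧
      W' 2 0 = W 2 0 + t * d₀ ∧ W' 2 1 = W 2 1 + t * d₁ := by
  obtain ⟨hpsd, hI, h22⟩ := hW
  obtain ⟨S, hS, hS2, hWS⟩ := hpsd.exists_eq_vecMulVec_add h22
  have hs : 0 < S 0 0 + S 1 1 := by
    have hS0 : S ≠ 0 := by
      rintro rfl
      rw [add_zero] at hWS
      exact hrank.not_ge (hWS ▸ rank_vecMulVec_le _ _)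
    simpa [trace_fin_three, hS2] using hS.trace_pos hS0
  obtain ⟨t, ht, hts⟩ :=
    exists_pos_mul_add_mul_le (1 + 2 * (W 2 0 * d₀ + W 2 1 * d₁)) (d₀ ^ 2 + d₁ ^ 2) hs
  set μ := 1 - t * (1 + 2 * (W 2 0 * d₀ + W 2 1 * d₁) + t * (d₀ ^ 2 + d₁ ^ 2)) / (S 0 0 + S 1 1)
    with hμ_def
  have hμ : 0 ≤ μ := by
    rw [hμ_def, sub_nonneg, div_le_one hs]; exact hts
  set g := W 2 + t • ![d₀, d₁, 0]
  set W' := vecMulVec g g + μ • S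
  have hW'_apply : ∀ i j, W' i j = g i * g j + μ * S i j := fun i j => by
    simp [W', vecMulVec_apply]
  have hW_apply : ∀ i j, W i j = W 2 i * W 2 j + S i j := fun i j => by
    conv_lhs => rw [hWS]
    simp [vecMulVec_apply]
  have hg : g 0 = W 2 0 + t * d₀ ∧ g 1 = W 2 1 + t * d₁ ∧ g 2 = 1 := by
    simp only [g, Pi.add_apply, Pi.smul_apply, smul_eq_mul, h22]
    simp [Matrix.cons_val]
  have htrace : W' 0 0 + W' 1 1 = W 0 0 + W 1 1 - t := by
    have hμs : μ * (S 0 0 + S 1 1) = S 0 0 + S 1 1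
        - t * (1 + 2 * (W 2 0 * d₀ + W 2 1 * d₁) + t * (d₀ ^ 2 + d₁ ^ 2)) := by
      rw [hμ_def]; field_simp
    rw [hW'_apply, hW'_apply, hW_apply 0 0, hW_apply 1 1, hg.1, hg.2.1]
    linear_combination hμs
  refine ⟨t, ht, W', ⟨?_, by linarith, ?_⟩, htrace, ?_, ?_⟩
  · simpa using (posSemidef_vecMulVec_self_star g).add (hS.smul hμ)
  · simp [hW'_apply, hg.2.2, hS2]
  · simp [hW'_apply, hg.1, hg.2.2, hS2]
  · simp [hW'_apply, hg.2.1, hg.2.2, hS2]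

theorem trace_Mmat_mul (α : ℝ) (a : EuclideanSpace ℝ (Fin 2)) (ζ : ℝ)
    {B : Matrix (Fin 3) (Fin 3) ℝ} (hB : B.IsHermitian) :
    (Mmat α a ζ * B).trace = α * (B 0 0 + B 1 1) + a 0 * B 2 0 + a 1 * B 2 1 + ζ * B 2 2 := by
  have h0 : B 0 2 = B 2 0 := by simpa using hB.apply 2 0
  have h1 : B 1 2 = B 2 1 := by simpa using hB.apply 2 1
  simp only [Mmat, trace_fin_three, mul_apply, Fin.sum_univ_three, h0, h1]
  simp
  ring

theorem Jv_apply_zero (E : EuclideanSpace ℝ (Fin 2)) : Jv E 0 = E 1 := by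
  simp [Jv, toE, Jmat, dotProduct]

theorem Jv_apply_one (E : EuclideanSpace ℝ (Fin 2)) : Jv E 1 = -E 0 := by
  simp [Jv, toE, Jmat, dotProduct]

theorem ZtE_apply_zero (R X : ℝ) (E : EuclideanSpace ℝ (Fin 2)) :
    ZtE R X E 0 = R * E 0 + X * E 1 := by
  simp [ZtE, toE, Zmat]

theorem ZtE_apply_one (R X : ℝ) (E : EuclideanSpace ℝ (Fin 2)) :
    ZtE R X E 1 = -X * E 0 + R * E 1 := by
  simp [ZtE, toE, Zmat]

def det2 (a b : EuclideanSpace ℝ (Fin 2)) : ℝ := a 0 * b 1 - a 1 * b 0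

theorem det2_swap (a b : EuclideanSpace ℝ (Fin 2)) : det2 b a = -det2 a b := by
  unfold det2; ring

theorem exists_solution_of_det2_ne_zero {a b : EuclideanSpace ℝ (Fin 2)} (h : det2 a b ≠ 0)
    (α β : ℝ) : ∃ d₀ d₁ : ℝ, a 0 * d₀ + a 1 * d₁ = α ∧ b 0 * d₀ + b 1 * d₁ = β := by
  refine ⟨(α * b 1 - β * a 1) / det2 a b, (β * a 0 - α * b 0) / det2 a b, ?_, ?_⟩ <;>
  · field_simp
    unfold det2
    ring

theorem exists_eq_Mmat_det2_ne_zero {E : EuclideanSpace ℝ (Fin 2)} (hE : E ≠ 0) {R X : ℝ} (hR : R ≠ 0)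
    (hX : X ≠ 0) {M₁ M₂ : Matrix (Fin 3) (Fin 3) ℝ}
    (hM₁ : M₁ ∈ ({MP E R, MQ E X, MV E R X} : Set (Matrix (Fin 3) (Fin 3) ℝ)))
    (hM₂ : M₂ ∈ ({MP E R, MQ E X, MV E R X} : Set (Matrix (Fin 3) (Fin 3) ℝ)))
    (hne : M₁ ≠ M₂) :
    ∃ α₁ a₁ ζ₁ α₂ a₂ ζ₂, M₁ = Mmat α₁ a₁ ζ₁ ∧ M₂ = Mmat α₂ a₂ ζ₂ ∧ det2 a₁ a₂ ≠ 0 := by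
  have hE2 : E 0 ^ 2 + E 1 ^ 2 ≠ 0 := by
    have : ‖E‖ ^ 2 ≠ 0 := by positivity
    simpa [EuclideanSpace.norm_sq_eq, Fin.sum_univ_two] using this
  have hPQ : det2 ((3 / 2 : ℝ) • E) ((3 / 2 : ℝ) • Jv E) = -(9 / 4) * (E 0 ^ 2 + E 1 ^ 2) := by
    simp only [det2, PiLp.smul_apply, smul_eq_mul, Jv_apply_zero, Jv_apply_one]; ring
  have hPV : det2 ((3 / 2 : ℝ) • E) ((2 : ℝ) • ZtE R X E) = -3 * X * (E 0 ^ 2 + E 1 ^ 2) := by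
    simp only [det2, PiLp.smul_apply, smul_eq_mul, ZtE_apply_zero, ZtE_apply_one]; ring
  have hQV : det2 ((3 / 2 : ℝ) • Jv E) ((2 : ℝ) • ZtE R X E) = 3 * R * (E 0 ^ 2 + E 1 ^ 2) := by
    simp only [det2, PiLp.smul_apply, smul_eq_mul, Jv_apply_zero, Jv_apply_one, ZtE_apply_zero,
      ZtE_apply_one]; ring
  simp only [Set.mem_insert_iff, Set.mem_singleton_iff] at hM₁ hM₂
  rcases hM₁ with rfl | rfl | rfl <;> rcases hM₂ with rfl | rfl | rfl <;>
    first
    | exact absurd rfl hne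
    | refine ⟨_, _, _, _, _, _, rfl, rfl, ?_⟩
      first
      | simp [hPQ, hPV, hQV, hR, hX, hE2]; done
      | rw [det2_swap]; simp [hPQ, hPV, hQV, hR, hX, hE2]

theorem stmt9 (E : EuclideanSpace ℝ (Fin 2)) (hE : E ≠ 0) (R X : ℝ)
    (hR : R ≠ 0) (hX : X ≠ 0) (Imax : ℝ)
    (M₁ M₂ : Matrix (Fin 3) (Fin 3) ℝ)
    (hM₁ : M₁ ∈ ({MP E R, MQ E X, MV E R X} : Set (Matrix (Fin 3) (Fin 3) ℝ)))
    (hM₂ : M₂ ∈ ({MP E R, MQ E X, MV E R X} : Set (Matrix (Fin 3) (Fin 3) ℝ)))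
    (hMne : M₁ ≠ M₂)
    (f₁ f₂ : ℝ → ℝ)
    (ρ : ℝ) (hρ : 0 < ρ)
    (Wstar : Matrix (Fin 3) (Fin 3) ℝ) (hWstar : Wstar ∈ Wset Imax)
    (hmin : ∀ W ∈ Wset Imax,
      f₁ ((M₁ * Wstar).trace) + f₂ ((M₂ * Wstar).trace) + ρ * Wstar.trace ≤
      f₁ ((M₁ * W).trace) + f₂ ((M₂ * W).trace) + ρ * W.trace) :
    Wstar.rank ≤ 1 := by
  by_contra! hrank
  obtain ⟨α₁, a₁, ζ₁, α₂, a₂, ζ₂, rfl, rfl, hdet⟩ := exists_eq_Mmat_det2_ne_zero hE hR hX hM₁ hM₂ hMne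
  obtain ⟨d₀, d₁, h₁, h₂⟩ := exists_solution_of_det2_ne_zero hdet α₁ α₂
  obtain ⟨t, ht, W, hW, h00, h20, h21⟩ := exists_mem_Wset_of_one_lt_rank hWstar hrank d₀ d₁
  have htrace_eq : ∀ {α a ζ}, a 0 * d₀ + a 1 * d₁ = α →
      (Mmat α a ζ * W).trace = (Mmat α a ζ * Wstar).trace := fun h => by
    rw [trace_Mmat_mul _ _ _ hW.1.1, trace_Mmat_mul _ _ _ hWstar.1.1, h00, h20, h21, hW.2.2,
      hWstar.2.2]
    linear_combination t * h
  have htrace : W.trace = Wstar.trace - t := by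
    rw [trace_fin_three, trace_fin_three, hW.2.2, hWstar.2.2]
    linarith
  have := hmin W hW
  rw [htrace_eq h₁, htrace_eq h₂, htrace] at this
  nlinarith
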